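/- Let μ be a probability measure on ℝ^D with mean c and covariance operator cov. For any affine d-dimensional subspace Π with orthogonal projection P_Π, the minimum of ∫‖x - P_Π(x)‖² dμ(x) over all such Π equals the sum of the eigenvalues λ_{d+1} + ... + λ_D of cov (eigenvalues listed in decreasing order with multiplicity). -/

import Mathlib

/-!
Write `Π = p + W`. The residual `x - P_Π x` is the projection of `x - p` onto `Wᗮ`, so for an
orthonormal basis `(g_j)` of `Wᗮ` the cost is `∑ⱼ ∫ ⟪x - p, g_j⟫² dμ`. Each term is a second
moment of a real random variable and hence at least its variance `⟪cov g_j, g_j⟫`, with equality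
when `p = c`. Expanding in the eigenbasis, `∑ⱼ ⟪cov g_j, g_j⟫ = ∑ᵢ λᵢ tᵢ` with weights
`tᵢ = ∑ⱼ ⟪bᵢ, g_j⟫² ∈ [0, 1]` summing to `D - d`, and such a weighted sum is at least the sum of
the `D - d` smallest eigenvalues (Ky Fan). The bound is attained by `p = c` and
`W = span {bᵢ | i < d}`.
-/

open MeasureTheory Module ProbabilityTheory Finset
open scoped RealInnerProductSpace

theorem Finset.sum_le_sum_mul_of_sum_eq_card {ι : Type*} [Fintype ι] [DecidableEq ι]
    (S : Finset ι) {lam t : ι → ℝ} (hlam : ∀ i ∈ S, ∀ j ∉ S, lam i ≤ lam j) (ht0 : ∀ i, 0 ≤ t i)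
    (ht1 : ∀ i, t i ≤ 1) (ht : ∑ i, t i = #S) :
    ∑ i ∈ S, lam i ≤ ∑ i, lam i * t i := by
  rcases S.eq_empty_or_nonempty with rfl | hS
  · have ht_zero : ∀ i, t i = 0 := by
      simpa [Finset.sum_eq_zero_iff_of_nonneg fun i _ => ht0 i] using ht
    simp [ht_zero]
  obtain ⟨i₀, hi₀, hm⟩ := S.exists_mem_eq_sup' hS lam
  set m := S.sup' hS lam
  -- `m` lies between the values of `lam` on `S` and off `S`; the left sides add up to
  -- `m * (∑ i, t i - #S) = 0`.
  have hterm : ∀ i, m * (t i - if i ∈ S then 1 else 0) ≤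
      lam i * t i - if i ∈ S then lam i else 0 := by
    intro i
    split_ifs with hi
    · nlinarith [S.le_sup' lam hi, ht1 i]
    · nlinarith [hm ▸ hlam i₀ hi₀ i hi, ht0 i]
  have hsum := Finset.sum_le_sum fun i (_ : i ∈ univ) => hterm i
  simp only [sum_sub_distrib, ← mul_sum, ht, Finset.sum_ite_mem, univ_inter, sum_const,
    nsmul_eq_mul, mul_one, sub_self, mul_zero] at hsum
  linarith

theorem Fin.card_filter_le_val {D d : ℕ} : #{l : Fin D | d ≤ (l : ℕ)} = D - d := by
  have : ({l : Fin D | d ≤ (l : ℕ)} : Finset (Fin D)) =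
      ({l : Fin D | (l : ℕ) < d} : Finset (Fin D))ᶜ := by
    ext; simp
  rw [this, card_compl, Fin.card_filter_val_lt, Fintype.card_fin]
  omega

section InnerProductSpace

variable {E : Type*} [NormedAddCommGroup E] [InnerProductSpace ℝ E]

theorem OrthonormalBasis.inner_map_self_eq_sum {ι : Type*} [Fintype ι]
    (B : OrthonormalBasis ι ℝ E) {T : E →ₗ[ℝ] E} {lam : ι → ℝ}
    (hT : ∀ i, T (B i) = lam i • B i) (g : E) :
    ⟪T g, g⟫ = ∑ i, lam i * ⟪B i, g⟫ ^ 2 := by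
  nth_rewrite 1 [← B.sum_repr' g]
  simp only [map_sum, map_smul, hT, sum_inner, inner_smul_left, RCLike.conj_to_real]
  exact sum_congr rfl fun i _ => by ring

theorem OrthonormalBasis.sum_le_sum_inner_map_self {ι : Type*} [Fintype ι] [DecidableEq ι]
    (B : OrthonormalBasis ι ℝ E) {T : E →ₗ[ℝ] E} {lam : ι → ℝ}
    (hT : ∀ i, T (B i) = lam i • B i) (S : Finset ι) (hlam : ∀ i ∈ S, ∀ j ∉ S, lam i ≤ lam j)
    {κ : Type*} [Fintype κ] {g : κ → E} (hg : Orthonormal ℝ g) (hκ : Fintype.card κ = #S) :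
    ∑ i ∈ S, lam i ≤ ∑ j, ⟪T (g j), g j⟫ := by
  have hle : ∀ i, ∑ j, ⟪B i, g j⟫ ^ 2 ≤ 1 := fun i => by
    simpa [real_inner_comm, B.orthonormal.1 i] using hg.sum_inner_products_le (s := univ) (B i)
  have hsum : ∑ i, ∑ j, ⟪B i, g j⟫ ^ 2 = #S := by
    rw [sum_comm]
    simp [B.sum_sq_inner_right, hg.1, hκ]
  calc ∑ i ∈ S, lam i ≤ ∑ i, lam i * ∑ j, ⟪B i, g j⟫ ^ 2 :=
        S.sum_le_sum_mul_of_sum_eq_card hlam (fun i => sum_nonneg fun j _ => sq_nonneg _) hle hsum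
    _ = ∑ j, ⟪T (g j), g j⟫ := by
      simp only [B.inner_map_self_eq_sum hT, mul_sum]
      exact sum_comm

theorem Submodule.sub_orthogonalProjectionOnto_sub_add (W : Submodule ℝ E)
    [W.HasOrthogonalProjection] (p x : E) :
    x - (W.orthogonalProjectionOnto (x - p) + p) = Wᗮ.starProjection (x - p) := by
  rw [Submodule.starProjection_orthogonal_val, Submodule.starProjection_apply]
  abel

theorem OrthonormalBasis.norm_sq_starProjection {K : Submodule ℝ E} [K.HasOrthogonalProjection]
    {κ : Type*} [Fintype κ] (g : OrthonormalBasis κ ℝ K) (z : E) :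
    ‖K.starProjection z‖ ^ 2 = ∑ j, ⟪z, g j⟫ ^ 2 := by
  rw [K.starProjection_apply, Submodule.norm_coe, ← g.sum_sq_inner_left]
  simp

variable [MeasurableSpace E] {μ : Measure E}

theorem integral_inner_sub_integral_sq_le [CompleteSpace E] [IsProbabilityMeasure μ]
    (hμ : MemLp id 2 μ) (p f : E) :
    ∫ x, ⟪x - ∫ y, y ∂μ, f⟫ ^ 2 ∂μ ≤ ∫ x, ⟪x - p, f⟫ ^ 2 ∂μ := by
  have hX : MemLp (fun x => ⟪x - p, f⟫) 2 μ := (hμ.sub (memLp_const p)).inner_const f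
  have hmean : ∫ x, ⟪x - p, f⟫ ∂μ = ⟪∫ y, y ∂μ - p, f⟫ := by
    have hint : Integrable (fun x : E => x) μ := hμ.integrable one_le_two
    simp_rw [real_inner_comm f]
    rw [integral_inner (f := fun x => x - p) (hint.sub (integrable_const p)) f,
      integral_sub hint (integrable_const p), integral_const, probReal_univ, one_smul]
  calc ∫ x, ⟪x - ∫ y, y ∂μ, f⟫ ^ 2 ∂μ = Var[fun x => ⟪x - p, f⟫; μ] := by
        rw [variance_eq_integral hX.aestronglyMeasurable.aemeasurable, hmean]
        simp only [← inner_sub_left, sub_sub_sub_cancel_right]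
    _ ≤ ∫ x, ⟪x - p, f⟫ ^ 2 ∂μ := variance_le_expectation_sq hX.aestronglyMeasurable

theorem integral_norm_sq_starProjection_sub [IsFiniteMeasure μ] (hμ : MemLp id 2 μ)
    {K : Submodule ℝ E} [K.HasOrthogonalProjection] {κ : Type*} [Fintype κ]
    (g : OrthonormalBasis κ ℝ K) (p : E) :
    ∫ x, ‖K.starProjection (x - p)‖ ^ 2 ∂μ = ∑ j, ∫ x, ⟪x - p, g j⟫ ^ 2 ∂μ := by
  simp_rw [g.norm_sq_starProjection]
  exact integral_finsetSum _ fun j _ =>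
    ((hμ.sub (memLp_const p)).inner_const (g j : E)).integrable_sq

end InnerProductSpace

theorem stmt3 {D d : ℕ} (hd : d ≤ D)
    (μ : Measure (EuclideanSpace ℝ (Fin D))) [IsProbabilityMeasure μ]
    (hμ : Integrable (fun x => ‖x‖ ^ 2) μ)
    (c : EuclideanSpace ℝ (Fin D)) (hc : c = ∫ x, x ∂μ)
    (cov : EuclideanSpace ℝ (Fin D) →ₗ[ℝ] EuclideanSpace ℝ (Fin D))
    (hcov : ∀ u v, (inner ℝ (cov u) v : ℝ) = ∫ x, (inner ℝ (x - c) u : ℝ) * (inner ℝ (x - c) v : ℝ) ∂μ)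
    (b : Fin D → EuclideanSpace ℝ (Fin D)) (hb : Orthonormal ℝ b)
    (lam : Fin D → ℝ) (hdec : Antitone lam)
    (heig : ∀ i, cov (b i) = lam i • b i) :
    IsLeast
      {e : ℝ | ∃ (p : EuclideanSpace ℝ (Fin D)) (W : Submodule ℝ (EuclideanSpace ℝ (Fin D))),
        finrank ℝ W = d ∧
        e = ∫ x, ‖x - (((W.orthogonalProjectionOnto (x - p)) : EuclideanSpace ℝ (Fin D)) + p)‖ ^ 2 ∂μ}
      (∑ l ∈ Finset.univ.filter (fun l : Fin D => d ≤ (l : ℕ)), lam l) := by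
  classical
  have hμ2 : MemLp id 2 μ := (memLp_two_iff_integrable_sq_norm aestronglyMeasurable_id).2 hμ
  have hvar : ∀ f, ∫ x, ⟪x - c, f⟫ ^ 2 ∂μ = ⟪cov f, f⟫ := fun f => by simp_rw [hcov, sq]
  let B := OrthonormalBasis.mk hb (hb.linearIndependent.span_eq_top_of_card_eq_finrank'
    (by simp)).ge
  have hBeig : ∀ i, cov (B i) = lam i • B i := by simpa [B] using heig
  set S : Finset (Fin D) := {l | d ≤ (l : ℕ)}
  have hS : ∀ i ∈ S, ∀ j ∉ S, lam i ≤ lam j := fun i hi j hj =>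
    hdec (Fin.le_def.2 (by simp [S] at hi hj; omega))
  simp_rw [Submodule.sub_orthogonalProjectionOnto_sub_add]
  constructor
  · let K := Submodule.span ℝ (S.image b : Set (EuclideanSpace ℝ (Fin D)))
    let g := OrthonormalBasis.span hb S
    refine ⟨c, Kᗮ, ?_, ?_⟩
    · refine Submodule.finrank_add_finrank_orthogonal' ?_
      rw [finrank_eq_card_basis g.toBasis, Fintype.card_coe, Fin.card_filter_le_val,
        finrank_euclideanSpace_fin]
      omega
    · simp_rw [Submodule.starProjection_orthogonal_val, sub_sub_cancel]
      rw [integral_norm_sq_starProjection_sub hμ2 g, ← sum_coe_sort S]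
      simp [g, hvar, heig, real_inner_smul_left, hb.1]
  · rintro _ ⟨p, W, hW, rfl⟩
    let g := stdOrthonormalBasis ℝ Wᗮ
    have hcard : Fintype.card (Fin (finrank ℝ Wᗮ)) = #S := by
      rw [Fintype.card_fin, Fin.card_filter_le_val]
      exact Submodule.finrank_add_finrank_orthogonal'
        (by rw [hW, finrank_euclideanSpace_fin]; omega)
    rw [integral_norm_sq_starProjection_sub hμ2 g]
    calc ∑ i ∈ S, lam i ≤ ∑ j, ⟪cov (g j), g j⟫ :=
          B.sum_le_sum_inner_map_self hBeig S hS
            (g.orthonormal.comp_linearIsometry Wᗮ.subtypeₗᵢ) hcard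
      _ ≤ ∑ j, ∫ x, ⟪x - p, g j⟫ ^ 2 ∂μ := sum_le_sum fun j _ => by
          rw [← hvar, hc]
          exact integral_inner_sub_integral_sq_le hμ2 p _
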